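/- Let Ω = { (ξ, η) ∈ ℝ² : 0 ≤ ξ ≤ 2 and |η| ≤ 1 + ξ/2 } be a trapezoid. Then the function x ↦ infdist(x, Ωᶜ), the distance from x to the complement of Ω, attains its maximum value 1, and the set of its maximizers (the set of max-min points of Ω) is exactly the vertical segment { (1, η) : |η| ≤ 3/2 − √5/2 }. -/

import Mathlib

/-- The trapezoid `Ω = {(ξ, η) : 0 ≤ ξ ≤ 2, |η| ≤ 1 + ξ/2}` in the Euclidean plane. -/
def trapezoid : Set (EuclideanSpace ℝ (Fin 2)) :=
  {x | 0 ≤ x 0 ∧ x 0 ≤ 2 ∧ |x 1| ≤ 1 + x 0 / 2}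

/-!
The trapezoid is the intersection of four closed half-planes `⟪uᵢ, x⟫ ≤ cᵢ`, and for a point of
such an intersection the distance to the complement is the least of the distances
`(cᵢ - ⟪uᵢ, x⟫) / ‖uᵢ‖` to the bounding lines: Cauchy–Schwarz bounds it below, moving along `uᵢ`
bounds it above. For the trapezoid at `(ξ, η)` these are `ξ`, `2 - ξ` and `(2 + ξ ∓ 2η) / √5`.
The first two have minimum at most `1`, with equality only at `ξ = 1`, and there the slanted sides
are at distance at least `1` exactly when `|η| ≤ 3/2 - √5/2`.
-/

open Metric RealInnerProductSpace

section HalfSpace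

variable {E : Type*} [NormedAddCommGroup E] [InnerProductSpace ℝ E] {u x y : E} {c : ℝ}

theorem sub_inner_le_norm_mul_dist (hy : c < ⟪u, y⟫) : c - ⟪u, x⟫ ≤ ‖u‖ * dist x y :=
  calc c - ⟪u, x⟫ ≤ ⟪u, y - x⟫ := by rw [inner_sub_right]; linarith
    _ ≤ ‖u‖ * ‖y - x‖ := real_inner_le_norm _ _
    _ = ‖u‖ * dist x y := by rw [dist_comm, dist_eq_norm]

theorem nonempty_setOf_lt_inner (hu : u ≠ 0) : {y | c < ⟪u, y⟫}.Nonempty := by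
  have hu' : 0 < ‖u‖ ^ 2 := by positivity
  refine ⟨((|c| + 1) / ‖u‖ ^ 2) • u, ?_⟩
  rw [Set.mem_ofPred_eq, real_inner_smul_right, real_inner_self_eq_norm_sq,
    div_mul_cancel₀ _ hu'.ne']
  linarith [le_abs_self c]

theorem infDist_setOf_lt_inner_le (hu : u ≠ 0) (hx : ⟪u, x⟫ ≤ c) :
    infDist x {y | c < ⟪u, y⟫} ≤ (c - ⟪u, x⟫) / ‖u‖ := by
  have hu' : 0 < ‖u‖ := norm_pos_iff.2 hu
  refine le_of_forall_gt_imp_ge_of_dense fun r hr => ?_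
  have hr0 : 0 < r := (div_nonneg (sub_nonneg.2 hx) hu'.le).trans_lt hr
  have hmem : x + (r / ‖u‖) • u ∈ {y | c < ⟪u, y⟫} := by
    rw [Set.mem_ofPred_eq, inner_add_right, real_inner_smul_right, real_inner_self_eq_norm_sq,
      sq, ← mul_assoc, div_mul_cancel₀ _ hu'.ne']
    rw [div_lt_iff₀ hu'] at hr
    nlinarith
  calc infDist x _ ≤ dist x (x + (r / ‖u‖) • u) := infDist_le_dist_of_mem hmem
    _ = r := by
      rw [dist_self_add_right, norm_smul, Real.norm_of_nonneg (by positivity),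
        div_mul_cancel₀ _ hu'.ne']

end HalfSpace

section Polyhedron

variable {E ι : Type*} [NormedAddCommGroup E] [InnerProductSpace ℝ E] {u : ι → E} {c : ι → ℝ}
  {x : E}

theorem infDist_compl_setOf_forall_inner_le_le {i : ι} (hu : u i ≠ 0)
    (hx : ∀ j, ⟪u j, x⟫ ≤ c j) :
    infDist x {y | ∀ j, ⟪u j, y⟫ ≤ c j}ᶜ ≤ (c i - ⟪u i, x⟫) / ‖u i‖ :=
  (infDist_le_infDist_of_subset (fun _ hy hP => (hP i).not_gt hy)
    (nonempty_setOf_lt_inner hu)).trans (infDist_setOf_lt_inner_le hu (hx i))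

theorem le_infDist_compl_setOf_forall_inner_le [Nonempty ι] (hu : ∀ i, u i ≠ 0) {r : ℝ}
    (hr : ∀ i, r ≤ (c i - ⟪u i, x⟫) / ‖u i‖) :
    r ≤ infDist x {y | ∀ j, ⟪u j, y⟫ ≤ c j}ᶜ := by
  obtain ⟨i₀⟩ := ‹Nonempty ι›
  have hne : {y | ∀ j, ⟪u j, y⟫ ≤ c j}ᶜ.Nonempty :=
    (nonempty_setOf_lt_inner (c := c i₀) (hu i₀)).mono fun _ hy hP => (hP i₀).not_gt hy
  refine (le_infDist hne).2 fun y hy => ?_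
  obtain ⟨j, hj⟩ : ∃ j, c j < ⟪u j, y⟫ := by simpa using hy
  calc r ≤ (c j - ⟪u j, x⟫) / ‖u j‖ := hr j
    _ ≤ dist x y := by
      rw [div_le_iff₀' (norm_pos_iff.2 (hu j))]
      exact sub_inner_le_norm_mul_dist hj

end Polyhedron

section Trapezoid

theorem inner_toLp_fin_two (a b : ℝ) (x : EuclideanSpace ℝ (Fin 2)) :
    ⟪!₂[a, b], x⟫ = a * x 0 + b * x 1 := by
  simp [PiLp.inner_apply, Fin.sum_univ_two]
  ring

theorem norm_toLp_fin_two (a b : ℝ) : ‖!₂[a, b]‖ = √(a ^ 2 + b ^ 2) := by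
  simp [EuclideanSpace.norm_eq, Fin.sum_univ_two]

noncomputable def trapezoidNormal : Fin 4 → EuclideanSpace ℝ (Fin 2) :=
  ![!₂[-1, 0], !₂[1, 0], !₂[-1, 2], !₂[-1, -2]]

def trapezoidOffset : Fin 4 → ℝ := ![0, 2, 2, 2]

theorem trapezoidNormal_ne_zero (i : Fin 4) : trapezoidNormal i ≠ 0 := by
  rw [← norm_pos_iff]
  fin_cases i <;> norm_num [trapezoidNormal, norm_toLp_fin_two]

theorem trapezoid_eq_setOf_forall_inner_le :
    trapezoid = {x | ∀ i, ⟪trapezoidNormal i, x⟫ ≤ trapezoidOffset i} := by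
  ext x
  simp only [trapezoid, trapezoidNormal, trapezoidOffset, Set.mem_ofPred_eq, Fin.forall_fin_succ,
    Matrix.cons_val_zero, Matrix.cons_val_succ, Matrix.cons_val_fin_one, forall_const,
    inner_toLp_fin_two, abs_le]
  constructor <;> intro h <;> refine ⟨?_, ?_, ?_, ?_⟩ <;> linarith

theorem forall_trapezoid_side_iff (p : ℝ → Prop) (x : EuclideanSpace ℝ (Fin 2)) :
    (∀ i, p ((trapezoidOffset i - ⟪trapezoidNormal i, x⟫) / ‖trapezoidNormal i‖)) ↔
      p (x 0) ∧ p (2 - x 0) ∧ p ((2 + x 0 - 2 * x 1) / √5) ∧ p ((2 + x 0 + 2 * x 1) / √5) := by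
  simp only [trapezoidNormal, trapezoidOffset, Fin.forall_fin_succ,
    Matrix.cons_val_zero, Matrix.cons_val_succ, Matrix.cons_val_fin_one, forall_const,
    inner_toLp_fin_two, norm_toLp_fin_two]
  ring_nf

theorem infDist_compl_trapezoid_le {x : EuclideanSpace ℝ (Fin 2)} (hx : x ∈ trapezoid) :
    infDist x trapezoidᶜ ≤ x 0 ∧ infDist x trapezoidᶜ ≤ 2 - x 0 ∧
      infDist x trapezoidᶜ ≤ (2 + x 0 - 2 * x 1) / √5 ∧
      infDist x trapezoidᶜ ≤ (2 + x 0 + 2 * x 1) / √5 := by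
  rw [trapezoid_eq_setOf_forall_inner_le] at hx ⊢
  exact (forall_trapezoid_side_iff _ x).1 fun i =>
    infDist_compl_setOf_forall_inner_le_le (trapezoidNormal_ne_zero i) hx

theorem le_infDist_compl_trapezoid {x : EuclideanSpace ℝ (Fin 2)} {r : ℝ} (h₀ : r ≤ x 0)
    (h₁ : r ≤ 2 - x 0) (h₂ : r ≤ (2 + x 0 - 2 * x 1) / √5) (h₃ : r ≤ (2 + x 0 + 2 * x 1) / √5) :
    r ≤ infDist x trapezoidᶜ := by
  rw [trapezoid_eq_setOf_forall_inner_le]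
  exact le_infDist_compl_setOf_forall_inner_le trapezoidNormal_ne_zero
    ((forall_trapezoid_side_iff (r ≤ ·) x).2 ⟨h₀, h₁, h₂, h₃⟩)

theorem infDist_compl_trapezoid_le_one (x : EuclideanSpace ℝ (Fin 2)) :
    infDist x trapezoidᶜ ≤ 1 := by
  by_cases hx : x ∈ trapezoid
  · obtain ⟨h₀, h₁, -, -⟩ := infDist_compl_trapezoid_le hx
    linarith
  · rw [infDist_zero_of_mem hx]
    exact zero_le_one

end Trapezoid

/-- For the trapezoid `Ω = {(ξ, η) : 0 ≤ ξ ≤ 2, |η| ≤ 1 + ξ/2}`, the function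
`x ↦ infdist(x, Ωᶜ)` attains its maximum value `1`, and the set of its maximizers
is exactly the segment `{(1, η) : |η| ≤ 3/2 − √5/2}`. -/
theorem stmt_9 :
    (∀ x : EuclideanSpace ℝ (Fin 2), Metric.infDist x trapezoidᶜ ≤ 1) ∧
    {x : EuclideanSpace ℝ (Fin 2) | Metric.infDist x trapezoidᶜ = 1} =
      {x : EuclideanSpace ℝ (Fin 2) | x 0 = 1 ∧ |x 1| ≤ 3 / 2 - Real.sqrt 5 / 2} := by
  have hs : 0 < √5 := by positivity
  refine ⟨infDist_compl_trapezoid_le_one,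
    Set.ext fun x => ⟨fun (h : infDist x trapezoidᶜ = 1) => ?_, fun ⟨h₀, h₁⟩ => ?_⟩⟩
  · have hx : x ∈ trapezoid := by
      by_contra hx
      rw [infDist_zero_of_mem hx] at h
      exact zero_ne_one h
    obtain ⟨h₀, h₁, h₂, h₃⟩ := infDist_compl_trapezoid_le hx
    rw [h] at h₀ h₁
    rw [h, one_le_div hs] at h₂ h₃
    exact ⟨by linarith, abs_le.2 ⟨by linarith, by linarith⟩⟩
  · obtain ⟨hη_ge, hη_le⟩ := abs_le.1 h₁
    refine le_antisymm (infDist_compl_trapezoid_le_one x)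
      (le_infDist_compl_trapezoid h₀.ge (by linarith) ?_ ?_)
    · rw [one_le_div hs]; linarith
    · rw [one_le_div hs]; linarith
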